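/- arXiv:2004.06479 — 4 statements merged into one kernel-verified Lean document; each statement's English description precedes it below -/
import Mathlib

section
/- Let $\theta \in (0,1]$, $\delta > 0$, $\kappa > 0$, and $\gamma \in [\delta, \kappa + \delta]$. Suppose $s, \bar{y} \in \mathbb{R}^d$ with $s \neq 0$ satisfy $\|\bar{y}\| \leq \kappa \|s\|$ and $s^\top \bar{y} \leq \kappa \|s\|^2$. Define $\hat{y} = \theta \bar{y} + (1-\theta)\gamma s$ and assume $s^\top \hat{y} \geq 0.25 \gamma \|s\|^2$. Then $\frac{\|\hat{y}\|^2}{s^\top \hat{y}} \leq \frac{4\kappa^2}{\delta} + 4(\kappa + \delta)$. -/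
open scoped RealInnerProductSpace

/-! Expanding the square, `‖θ ȳ + c s‖² ≤ (θκ + c)² ‖s‖²` with `c = (1 - θ)γ`. By convexity of
the square this coefficient is at most `κ² + γ²`, and `δ ≤ γ ≤ κ + δ` turns that into
`(κ²/δ + κ + δ) γ`, which the curvature condition `sᵀŷ ≥ γ ‖s‖² / 4` converts into the
stated ratio. -/

theorem norm_smul_add_smul_sq_le {E : Type*} [NormedAddCommGroup E] [InnerProductSpace ℝ E]
    {a b κ : ℝ} {x y : E} (ha : 0 ≤ a) (hb : 0 ≤ b)
    (hx : ‖x‖ ≤ κ * ‖y‖) (hxy : ⟪y, x⟫ ≤ κ * ‖y‖ ^ 2) :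
    ‖a • x + b • y‖ ^ 2 ≤ (a * κ + b) ^ 2 * ‖y‖ ^ 2 := by
  have hx2 : ‖x‖ ^ 2 ≤ (κ * ‖y‖) ^ 2 := pow_le_pow_left₀ (norm_nonneg x) hx 2
  have hab : 0 ≤ 2 * (a * b) := by positivity
  calc ‖a • x + b • y‖ ^ 2 = a ^ 2 * ‖x‖ ^ 2 + 2 * (a * b) * ⟪y, x⟫ + b ^ 2 * ‖y‖ ^ 2 := by
        rw [norm_add_sq_real, norm_smul, norm_smul, real_inner_smul_left, real_inner_smul_right,
          real_inner_comm, Real.norm_of_nonneg ha, Real.norm_of_nonneg hb]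
        ring
    _ ≤ a ^ 2 * (κ * ‖y‖) ^ 2 + 2 * (a * b) * (κ * ‖y‖ ^ 2) + b ^ 2 * ‖y‖ ^ 2 := by
        gcongr
    _ = (a * κ + b) ^ 2 * ‖y‖ ^ 2 := by ring

theorem sq_convex_comb_le_sq_add_sq {θ u v : ℝ} (hθ₀ : 0 ≤ θ) (hθ₁ : θ ≤ 1) :
    (θ * u + (1 - θ) * v) ^ 2 ≤ u ^ 2 + v ^ 2 := by
  nlinarith [mul_nonneg (mul_nonneg hθ₀ (sub_nonneg.2 hθ₁)) (sq_nonneg (u - v)),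
    mul_nonneg (sub_nonneg.2 hθ₁) (sq_nonneg u), mul_nonneg hθ₀ (sq_nonneg v)]

theorem sq_add_sq_le_of_mem_Icc {δ κ γ : ℝ} (hδ : 0 < δ) (hγ : γ ∈ Set.Icc δ (κ + δ)) :
    κ ^ 2 + γ ^ 2 ≤ (κ ^ 2 / δ + κ + δ) * γ := by
  have hκ : κ ^ 2 ≤ κ ^ 2 / δ * γ := by
    rw [div_mul_eq_mul_div, le_div_iff₀ hδ]
    exact mul_le_mul_of_nonneg_left hγ.1 (sq_nonneg κ)
  nlinarith [hγ.1, hγ.2]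

theorem damped_ratio_bound_general (d : ℕ) (θ δ κ γ : ℝ)
    (hθ : θ ∈ Set.Ioc (0 : ℝ) 1) (hδ : 0 < δ)
    (hγ : γ ∈ Set.Icc δ (κ + δ))
    (s ybar : EuclideanSpace ℝ (Fin d))
    (hy1 : ‖ybar‖ ≤ κ * ‖s‖) (hy2 : ⟪s, ybar⟫ ≤ κ * ‖s‖ ^ 2)
    (yhat : EuclideanSpace ℝ (Fin d))
    (hyhat : yhat = θ • ybar + ((1 - θ) * γ) • s)
    (hcurv : 0.25 * γ * ‖s‖ ^ 2 ≤ ⟪s, yhat⟫) :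
    ‖yhat‖ ^ 2 / ⟪s, yhat⟫ ≤ 4 * κ ^ 2 / δ + 4 * (κ + δ) := by
  have hγ₀ : 0 ≤ γ := hδ.le.trans hγ.1
  have hnorm : ‖yhat‖ ^ 2 ≤ (θ * κ + (1 - θ) * γ) ^ 2 * ‖s‖ ^ 2 := hyhat ▸
    norm_smul_add_smul_sq_le hθ.1.le (mul_nonneg (sub_nonneg.2 hθ.2) hγ₀) hy1 hy2
  have hcoeff : (θ * κ + (1 - θ) * γ) ^ 2 ≤ (κ ^ 2 / δ + κ + δ) * γ :=
    (sq_convex_comb_le_sq_add_sq hθ.1.le hθ.2).trans (sq_add_sq_le_of_mem_Icc hδ hγ)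
  have hC : 0 ≤ 4 * κ ^ 2 / δ + 4 * (κ + δ) := by
    have : 0 ≤ κ + δ := hγ₀.trans hγ.2
    positivity
  refine div_le_of_le_mul₀ (le_trans (by positivity) hcurv) hC ?_
  calc ‖yhat‖ ^ 2 ≤ (κ ^ 2 / δ + κ + δ) * γ * ‖s‖ ^ 2 :=
        hnorm.trans (mul_le_mul_of_nonneg_right hcoeff (sq_nonneg _))
    _ = (4 * κ ^ 2 / δ + 4 * (κ + δ)) * (0.25 * γ * ‖s‖ ^ 2) := by ring
    _ ≤ (4 * κ ^ 2 / δ + 4 * (κ + δ)) * ⟪s, yhat⟫ := mul_le_mul_of_nonneg_left hcurv hC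

/-- bound on `‖ŷ‖² / (sᵀŷ)` for the damped vector
`ŷ = θ ȳ + (1-θ) γ s`. -/
theorem damped_ratio_bound (d : ℕ) (θ δ κ γ : ℝ)
    (hθ : θ ∈ Set.Ioc (0 : ℝ) 1) (hδ : 0 < δ) (hκ : 0 < κ)
    (hγ : γ ∈ Set.Icc δ (κ + δ))
    (s ybar : EuclideanSpace ℝ (Fin d)) (hs : s ≠ 0)
    (hy1 : ‖ybar‖ ≤ κ * ‖s‖) (hy2 : ⟪s, ybar⟫ ≤ κ * ‖s‖ ^ 2)
    (yhat : EuclideanSpace ℝ (Fin d))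
    (hyhat : yhat = θ • ybar + ((1 - θ) * γ) • s)
    (hcurv : 0.25 * γ * ‖s‖ ^ 2 ≤ ⟪s, yhat⟫) :
    ‖yhat‖ ^ 2 / ⟪s, yhat⟫ ≤ 4 * κ ^ 2 / δ + 4 * (κ + δ) :=
  damped_ratio_bound_general d θ δ κ γ hθ hδ hγ s ybar hy1 hy2 yhat hyhat hcurv
end

section
/- Let $H, H^+$ be symmetric positive definite matrices related by the BFGS update $H^+ = H - \rho(H\hat{y}s^\top + s\hat{y}^\top H) + \rho s s^\top + \rho^2 (\hat{y}^\top H \hat{y}) s s^\top$ with $\rho = (s^\top \hat{y})^{-1} > 0$. Suppose $\frac{\|s\|^2}{s^\top \hat{y}} \leq \frac{4}{\delta}$ and $\frac{\|\hat{y}\|^2}{s^\top \hat{y}} \leq \frac{4(\kappa+\delta)^2}{\delta}$ for constants $\kappa, \delta > 0$. Then $\|H^+\| \leq \left(1 + \frac{4(\kappa+\delta)}{\delta}\right)^2 \|H\| + \frac{4}{\delta}$. -/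
/-!
Each correction term of the BFGS update is a rank-one map of norm at most `ρ ‖s‖ ‖ŷ‖ ‖H‖`,
`ρ ‖s‖²` or `ρ² ‖s‖² ‖ŷ‖² ‖H‖`, so the triangle inequality gives
`‖H⁺‖ ≤ (1 + ρ ‖s‖ ‖ŷ‖)² ‖H‖ + ρ ‖s‖²`. Since
`ρ ‖s‖ ‖ŷ‖ = √((‖s‖² / sᵀŷ) (‖ŷ‖² / sᵀŷ))`, the two curvature bounds give `ρ ‖s‖ ‖ŷ‖ ≤ 4 (κ + δ) / δ`.
-/

open scoped RealInnerProductSpace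

/-- The outer product `a bᵀ` of two vectors, as the linear map `x ↦ ⟪a, x⟫ • b`. -/
noncomputable def outer {d : ℕ} (a b : EuclideanSpace ℝ (Fin d)) :
    EuclideanSpace ℝ (Fin d) →L[ℝ] EuclideanSpace ℝ (Fin d) :=
  (innerSL ℝ a).smulRight b

section BFGSUpdate

variable {d : ℕ}

lemma norm_outer (a b : EuclideanSpace ℝ (Fin d)) : ‖outer a b‖ = ‖a‖ * ‖b‖ := by
  rw [outer, ContinuousLinearMap.norm_smulRight_apply, innerSL_apply_norm]

noncomputable def bfgsInverseUpdate (H : EuclideanSpace ℝ (Fin d) →L[ℝ] EuclideanSpace ℝ (Fin d))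
    (s y : EuclideanSpace ℝ (Fin d)) (ρ : ℝ) :
    EuclideanSpace ℝ (Fin d) →L[ℝ] EuclideanSpace ℝ (Fin d) :=
  H - ρ • (outer s (H y) + outer (H y) s) + ρ • outer s s + (ρ ^ 2 * ⟪y, H y⟫) • outer s s

lemma norm_bfgsInverseUpdate_le (H : EuclideanSpace ℝ (Fin d) →L[ℝ] EuclideanSpace ℝ (Fin d))
    (s y : EuclideanSpace ℝ (Fin d)) {ρ : ℝ} (hρ : 0 ≤ ρ) :
    ‖bfgsInverseUpdate H s y ρ‖ ≤ (1 + ρ * (‖s‖ * ‖y‖)) ^ 2 * ‖H‖ + ρ * ‖s‖ ^ 2 := by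
  have hHy : ‖H y‖ ≤ ‖H‖ * ‖y‖ := H.le_opNorm y
  have hq : |⟪y, H y⟫| ≤ ‖H‖ * ‖y‖ ^ 2 :=
    calc |⟪y, H y⟫| ≤ ‖y‖ * ‖H y‖ := abs_real_inner_le_norm _ _
      _ ≤ ‖y‖ * (‖H‖ * ‖y‖) := by gcongr
      _ = ‖H‖ * ‖y‖ ^ 2 := by ring
  calc ‖bfgsInverseUpdate H s y ρ‖
      ≤ ‖H‖ + ‖ρ • (outer s (H y) + outer (H y) s)‖ + ‖ρ • outer s s‖
          + ‖(ρ ^ 2 * ⟪y, H y⟫) • outer s s‖ := by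
        unfold bfgsInverseUpdate
        grw [norm_add_le, norm_add_le, norm_sub_le]
    _ ≤ ‖H‖ + ρ * (‖s‖ * ‖H y‖ + ‖H y‖ * ‖s‖) + ρ * (‖s‖ * ‖s‖)
          + ρ ^ 2 * |⟪y, H y⟫| * (‖s‖ * ‖s‖) := by
        simp only [norm_smul, norm_mul, norm_pow, Real.norm_eq_abs, abs_of_nonneg hρ, norm_outer]
        gcongr
        exact norm_add_le_of_le (norm_outer _ _).le (norm_outer _ _).le
    _ ≤ ‖H‖ + ρ * (‖s‖ * (‖H‖ * ‖y‖) + ‖H‖ * ‖y‖ * ‖s‖) + ρ * (‖s‖ * ‖s‖)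
          + ρ ^ 2 * (‖H‖ * ‖y‖ ^ 2) * (‖s‖ * ‖s‖) := by gcongr
    _ = (1 + ρ * (‖s‖ * ‖y‖)) ^ 2 * ‖H‖ + ρ * ‖s‖ ^ 2 := by ring

end BFGSUpdate

lemma mul_div_eq_sqrt_sq_div_mul_sq_div {a b σ : ℝ} (ha : 0 ≤ a) (hb : 0 ≤ b) (hσ : 0 < σ) :
    a * b / σ = √(a ^ 2 / σ * (b ^ 2 / σ)) := by
  rw [show a ^ 2 / σ * (b ^ 2 / σ) = (a * b / σ) * (a * b / σ) by ring,
    Real.sqrt_mul_self (by positivity)]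

theorem bfgs_inverse_update_norm_recursion_general (d : ℕ) (κ δ : ℝ) (hκ : 0 < κ) (hδ : 0 < δ)
    (H Hplus : EuclideanSpace ℝ (Fin d) →L[ℝ] EuclideanSpace ℝ (Fin d))
    (s yhat : EuclideanSpace ℝ (Fin d)) (ρ : ℝ)
    (hsy : 0 < ⟪s, yhat⟫) (hρ : ρ = (⟪s, yhat⟫)⁻¹)
    (hupdate : Hplus = H - ρ • (outer s (H yhat) + outer (H yhat) s)
        + ρ • outer s s + (ρ ^ 2 * ⟪yhat, H yhat⟫) • outer s s)
    (hs : ‖s‖ ^ 2 / ⟪s, yhat⟫ ≤ 4 / δ)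
    (hy : ‖yhat‖ ^ 2 / ⟪s, yhat⟫ ≤ 4 * (κ + δ) ^ 2 / δ) :
    ‖Hplus‖ ≤ (1 + 4 * (κ + δ) / δ) ^ 2 * ‖H‖ + 4 / δ := by
  have hρ0 : 0 ≤ ρ := hρ ▸ inv_nonneg.mpr hsy.le
  have hρs : ρ * ‖s‖ ^ 2 ≤ 4 / δ := by rwa [hρ, inv_mul_eq_div]
  have hρsy : ρ * (‖s‖ * ‖yhat‖) ≤ 4 * (κ + δ) / δ :=
    calc ρ * (‖s‖ * ‖yhat‖)
        = √(‖s‖ ^ 2 / ⟪s, yhat⟫ * (‖yhat‖ ^ 2 / ⟪s, yhat⟫)) := by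
          rw [hρ, inv_mul_eq_div, mul_div_eq_sqrt_sq_div_mul_sq_div (norm_nonneg _)
            (norm_nonneg _) hsy]
      _ ≤ √(4 / δ * (4 * (κ + δ) ^ 2 / δ)) := by gcongr
      _ = √((4 * (κ + δ) / δ) * (4 * (κ + δ) / δ)) := by ring_nf
      _ = 4 * (κ + δ) / δ := Real.sqrt_mul_self (by positivity)
  calc ‖Hplus‖ ≤ (1 + ρ * (‖s‖ * ‖yhat‖)) ^ 2 * ‖H‖ + ρ * ‖s‖ ^ 2 :=
        hupdate ▸ norm_bfgsInverseUpdate_le H s yhat hρ0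
    _ ≤ (1 + 4 * (κ + δ) / δ) ^ 2 * ‖H‖ + 4 / δ := by gcongr

/-- the key recursion bounding the growth of the inverse Hessian
approximation under the BFGS update. -/
theorem bfgs_inverse_update_norm_recursion (d : ℕ) (κ δ : ℝ) (hκ : 0 < κ) (hδ : 0 < δ)
    (H Hplus : EuclideanSpace ℝ (Fin d) →L[ℝ] EuclideanSpace ℝ (Fin d))
    (hHsym : ∀ x y : EuclideanSpace ℝ (Fin d), ⟪H x, y⟫ = ⟪x, H y⟫)
    (hHpos : ∀ x : EuclideanSpace ℝ (Fin d), x ≠ 0 → 0 < ⟪x, H x⟫)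
    (hHpsym : ∀ x y : EuclideanSpace ℝ (Fin d), ⟪Hplus x, y⟫ = ⟪x, Hplus y⟫)
    (hHppos : ∀ x : EuclideanSpace ℝ (Fin d), x ≠ 0 → 0 < ⟪x, Hplus x⟫)
    (s yhat : EuclideanSpace ℝ (Fin d)) (ρ : ℝ)
    (hsy : 0 < ⟪s, yhat⟫) (hρ : ρ = (⟪s, yhat⟫)⁻¹)
    (hupdate : Hplus = H - ρ • (outer s (H yhat) + outer (H yhat) s)
        + ρ • outer s s + (ρ ^ 2 * ⟪yhat, H yhat⟫) • outer s s)
    (hs : ‖s‖ ^ 2 / ⟪s, yhat⟫ ≤ 4 / δ)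
    (hy : ‖yhat‖ ^ 2 / ⟪s, yhat⟫ ≤ 4 * (κ + δ) ^ 2 / δ) :
    ‖Hplus‖ ≤ (1 + 4 * (κ + δ) / δ) ^ 2 * ‖H‖ + 4 / δ :=
  bfgs_inverse_update_norm_recursion_general d κ δ hκ hδ H Hplus s yhat ρ hsy hρ hupdate hs hy
end

section
/- Let $f : \mathbb{R}^d \to \mathbb{R}$ be differentiable with $L$-Lipschitz gradient, let $H$ be a symmetric matrix with $\sigma_{\min} I \preceq H \preceq \sigma_{\max} I$ for $0 < \sigma_{\min} \leq \sigma_{\max}$, let $v \in \mathbb{R}^d$, $\eta > 0$, and set $x^+ = x - \eta H v$. Then $f(x^+) \leq f(x) - \eta\left(\frac{\sigma_{\min}}{2} - \frac{L\eta\sigma_{\max}^2}{2}\right)\|v\|^2 + \frac{\eta \sigma_{\max}}{2}\|\nabla f(x) - v\|^2$. -/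
open scoped RealInnerProductSpace

/-!
The descent lemma for an `L`-smooth `f` gives
`f x⁺ ≤ f x - η ⟪∇f x, H v⟫ + (L / 2) η² ‖H v‖²`. Polarizing the positive form `⟪·, H ·⟫`
at `∇f x` and `v` bounds the cross term below by `(σmin ‖v‖² - σmax ‖∇f x - v‖²) / 2`, and
Cauchy–Schwarz for the same form at `v` and `H v` gives `‖H v‖ ≤ σmax ‖v‖`.
-/

theorem nonneg_of_forall_norm_sub_le_mul {E F : Type*} [NormedAddCommGroup E] [Nontrivial E]
    [SeminormedAddCommGroup F] {g : E → F} {L : ℝ}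
    (h : ∀ a b, ‖g a - g b‖ ≤ L * ‖a - b‖) : 0 ≤ L := by
  obtain ⟨a, b, hab⟩ := exists_pair_ne E
  exact nonneg_of_mul_nonneg_left ((norm_nonneg _).trans (h a b))
    (norm_pos_iff.2 (sub_ne_zero.2 hab))

section InnerProductSpace

variable {E : Type*} [NormedAddCommGroup E] [InnerProductSpace ℝ E]

namespace ContinuousLinearMap.IsPositive

variable {T : E →L[ℝ] E}

theorem inner_self_sub_inner_sub_le (hT : T.IsPositive) (a b : E) :
    ⟪b, T b⟫ - ⟪a - b, T (a - b)⟫ ≤ 2 * ⟪a, T b⟫ := by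
  have hsymm : ⟪b, T a⟫ = ⟪a, T b⟫ := by
    rw [← hT.inner_left_eq_inner_right, real_inner_comm]
  have := hT.inner_nonneg_right a
  simp only [map_sub, inner_sub_left, inner_sub_right, hsymm]
  linarith

theorem norm_apply_sq_le (hT : T.IsPositive) {c : ℝ} (hc : ∀ z, ⟪z, T z⟫ ≤ c * ‖z‖ ^ 2)
    (z : E) : ‖T z‖ ^ 2 ≤ c ^ 2 * ‖z‖ ^ 2 := by
  let B : LinearMap.BilinForm ℝ E := (innerₗ E).compl₂ (T : E →ₗ[ℝ] E)
  have hB : ∀ a b, B a b = ⟪a, T b⟫ := fun _ _ ↦ rfl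
  have cauchySchwarz := B.apply_mul_apply_le_of_forall_zero_le
    (fun a ↦ (hB a a).symm ▸ hT.inner_nonneg_right a) z (T z)
  have hTT : ⟪z, T (T z)⟫ = ‖T z‖ ^ 2 := by
    rw [← hT.inner_left_eq_inner_right, real_inner_self_eq_norm_sq]
  rw [hB, hB, hB, hB, hTT, real_inner_self_eq_norm_sq] at cauchySchwarz
  have hcz := (hT.inner_nonneg_right z).trans (hc z)
  have hquartic : ‖T z‖ ^ 2 * ‖T z‖ ^ 2 ≤ c ^ 2 * ‖z‖ ^ 2 * ‖T z‖ ^ 2 := by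
    calc ‖T z‖ ^ 2 * ‖T z‖ ^ 2 ≤ ⟪z, T z⟫ * ⟪T z, T (T z)⟫ := cauchySchwarz
      _ ≤ (c * ‖z‖ ^ 2) * (c * ‖T z‖ ^ 2) :=
        mul_le_mul (hc z) (hc (T z)) (hT.inner_nonneg_right _) hcz
      _ = c ^ 2 * ‖z‖ ^ 2 * ‖T z‖ ^ 2 := by ring
  rcases (sq_nonneg ‖T z‖).eq_or_lt with h0 | hpos
  · rw [← h0]; positivity
  · exact le_of_mul_le_mul_right hquartic hpos

end ContinuousLinearMap.IsPositive

variable [CompleteSpace E] {f : E → ℝ}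

theorem hasDerivAt_apply_add_smul (hf : Differentiable ℝ f) (x u : E) (t : ℝ) :
    HasDerivAt (fun s : ℝ ↦ f (x + s • u)) ⟪gradient f (x + t • u), u⟫ t := by
  have hline : HasDerivAt (fun s : ℝ ↦ x + s • u) u t := by
    simpa using ((hasDerivAt_id t).smul_const u).const_add x
  simpa only [Function.comp_def, InnerProductSpace.toDual_apply_apply] using
    (hasGradientAt_iff_hasFDerivAt.1 (hf _).hasGradientAt).comp_hasDerivAt t hline

theorem image_le_add_inner_gradient_add_sq {L : ℝ} (hf : Differentiable ℝ f)
    (hlip : ∀ a b, ‖gradient f a - gradient f b‖ ≤ L * ‖a - b‖) (x y : E) :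
    f y ≤ f x + ⟪gradient f x, y - x⟫ + L / 2 * ‖y - x‖ ^ 2 := by
  set u := y - x
  have hslope : ∀ t ∈ Set.Ico (0 : ℝ) 1,
      ⟪gradient f (x + t • u), u⟫ ≤ ⟪gradient f x, u⟫ + L * t * ‖u‖ ^ 2 := by
    rintro t ⟨ht, -⟩
    have := calc ⟪gradient f (x + t • u) - gradient f x, u⟫
        ≤ ‖gradient f (x + t • u) - gradient f x‖ * ‖u‖ := real_inner_le_norm _ _
      _ ≤ L * ‖x + t • u - x‖ * ‖u‖ := by gcongr; exact hlip _ _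
      _ = L * t * ‖u‖ ^ 2 := by
        rw [add_sub_cancel_left, norm_smul, Real.norm_of_nonneg ht]; ring
    rwa [inner_sub_left, sub_le_iff_le_add'] at this
  have hB : ∀ t : ℝ, HasDerivAt
      (fun s ↦ f x + s * ⟪gradient f x, u⟫ + L / 2 * s ^ 2 * ‖u‖ ^ 2)
      (⟪gradient f x, u⟫ + L * t * ‖u‖ ^ 2) t := by
    intro t
    have := (((hasDerivAt_id t).mul_const ⟪gradient f x, u⟫).const_add (f x)).add
      (((hasDerivAt_pow 2 t).const_mul (L / 2)).mul_const (‖u‖ ^ 2))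
    exact this.congr_deriv (by ring)
  have key := image_le_of_deriv_right_le_deriv_boundary
    (fun t _ ↦ (hasDerivAt_apply_add_smul hf x u t).continuousAt.continuousWithinAt)
    (fun t _ ↦ (hasDerivAt_apply_add_smul hf x u t).hasDerivWithinAt)
    (by simp) (fun t _ ↦ (hB t).continuousAt.continuousWithinAt)
    (fun t _ ↦ (hB t).hasDerivWithinAt) hslope (Set.right_mem_Icc.2 zero_le_one)
  simpa [u] using key

end InnerProductSpace

theorem quasi_newton_descent_general (d : ℕ) (f : EuclideanSpace ℝ (Fin d) → ℝ) (L : ℝ)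
    (hdiff : Differentiable ℝ f)
    (hlip : ∀ a b : EuclideanSpace ℝ (Fin d),
      ‖gradient f a - gradient f b‖ ≤ L * ‖a - b‖)
    (σmin σmax : ℝ) (hσmin : 0 < σmin)
    (H : EuclideanSpace ℝ (Fin d) →L[ℝ] EuclideanSpace ℝ (Fin d))
    (hHsym : ∀ a b : EuclideanSpace ℝ (Fin d), ⟪H a, b⟫ = ⟪a, H b⟫)
    (hHlow : ∀ z : EuclideanSpace ℝ (Fin d), σmin * ‖z‖ ^ 2 ≤ ⟪z, H z⟫)
    (hHup : ∀ z : EuclideanSpace ℝ (Fin d), ⟪z, H z⟫ ≤ σmax * ‖z‖ ^ 2)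
    (v x xp : EuclideanSpace ℝ (Fin d)) (η : ℝ) (hη : 0 < η)
    (hxp : xp = x - η • H v) :
    f xp ≤ f x - η * (σmin / 2 - L * η * σmax ^ 2 / 2) * ‖v‖ ^ 2
      + η * σmax / 2 * ‖gradient f x - v‖ ^ 2 := by
  subst hxp
  rcases subsingleton_or_nontrivial (EuclideanSpace ℝ (Fin d)) with hE | hE
  · simp [Subsingleton.elim v 0, Subsingleton.elim (gradient f x) 0]
  have hL : 0 ≤ L := nonneg_of_forall_norm_sub_le_mul hlip
  have hH : H.IsPositive := H.isPositive_iff.2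
    ⟨hHsym, fun z ↦ real_inner_comm z (H z) ▸ (by positivity : 0 ≤ σmin * ‖z‖ ^ 2).trans (hHlow z)⟩
  set g := gradient f x
  have hstep : f (x - η • H v) ≤ f x - η * ⟪g, H v⟫ + L / 2 * η ^ 2 * ‖H v‖ ^ 2 := by
    have := image_le_add_inner_gradient_add_sq hdiff hlip x (x - η • H v)
    rwa [sub_sub_cancel_left, inner_neg_right, real_inner_smul_right, norm_neg, norm_smul,
      Real.norm_of_nonneg hη.le, mul_pow, ← mul_assoc, ← sub_eq_add_neg] at this
  have hcross : σmin * ‖v‖ ^ 2 - σmax * ‖g - v‖ ^ 2 ≤ 2 * ⟪g, H v⟫ := by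
    linarith [hHlow v, hHup (g - v), hH.inner_self_sub_inner_sub_le g v]
  have hnorm : ‖H v‖ ^ 2 ≤ σmax ^ 2 * ‖v‖ ^ 2 := hH.norm_apply_sq_le hHup v
  linarith [mul_le_mul_of_nonneg_left hcross hη.le,
    mul_le_mul_of_nonneg_left hnorm (by positivity : 0 ≤ L / 2 * η ^ 2)]

/-- the one-step descent inequality for a quasi-Newton step
`x⁺ = x - η H v` with an `L`-smooth function `f` and preconditioner `H`
satisfying `σmin I ⪯ H ⪯ σmax I`. -/
theorem quasi_newton_descent (d : ℕ) (f : EuclideanSpace ℝ (Fin d) → ℝ) (L : ℝ)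
    (hdiff : Differentiable ℝ f)
    (hlip : ∀ a b : EuclideanSpace ℝ (Fin d),
      ‖gradient f a - gradient f b‖ ≤ L * ‖a - b‖)
    (σmin σmax : ℝ) (hσmin : 0 < σmin) (hσ : σmin ≤ σmax)
    (H : EuclideanSpace ℝ (Fin d) →L[ℝ] EuclideanSpace ℝ (Fin d))
    (hHsym : ∀ a b : EuclideanSpace ℝ (Fin d), ⟪H a, b⟫ = ⟪a, H b⟫)
    (hHlow : ∀ z : EuclideanSpace ℝ (Fin d), σmin * ‖z‖ ^ 2 ≤ ⟪z, H z⟫)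
    (hHup : ∀ z : EuclideanSpace ℝ (Fin d), ⟪z, H z⟫ ≤ σmax * ‖z‖ ^ 2)
    (v x xp : EuclideanSpace ℝ (Fin d)) (η : ℝ) (hη : 0 < η)
    (hxp : xp = x - η • H v) :
    f xp ≤ f x - η * (σmin / 2 - L * η * σmax ^ 2 / 2) * ‖v‖ ^ 2
      + η * σmax / 2 * ‖gradient f x - v‖ ^ 2 :=
  quasi_newton_descent_general d f L hdiff hlip σmin σmax hσmin H hHsym hHlow hHup v x xp η hη hxp
end

section
/- Let $f : \mathbb{R}^d \to \mathbb{R}$ be differentiable with $L$-Lipschitz gradient and bounded below by $f^*$. Let $\{x_k\}_{k=0}^{K}$ and $\{v_k\}_{k=0}^{K-1}$ satisfy $x_{k+1} = x_k - \eta H_k v_k$ with $\sigma_{\min} I \preceq H_k \preceq \sigma_{\max} I$, and suppose for every $k$ the bound $\|\nabla f(x_k) - v_k\|^2 \leq \frac{L^2 \eta^2 \sigma_{\max}^2}{b} \sum_{i=k_0}^{k-1} \|v_i\|^2$ holds, where $k_0 = q\lfloor k/q \rfloor$ and $q \leq b$. If $\beta^* := \frac{\eta\sigma_{\min}}{2}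 - \frac{L\eta^2\sigma_{\max}^2}{2} - \frac{\eta^3\sigma_{\max}^3 L^2 q}{2b} > 0$, then $\sum_{k=0}^{K-1} \beta^* \|v_k\|^2 \leq f(x_0) - f^*$. -/
open scoped RealInnerProductSpace

/-- Descent lemma: quadratic upper bound for a function with Lipschitz gradient. -/
lemma spider_descent_lemma {d : ℕ} (f : EuclideanSpace ℝ (Fin d) → ℝ) (L : ℝ)
    (hdiff : Differentiable ℝ f)
    (hlip : ∀ a c : EuclideanSpace ℝ (Fin d),
      ‖gradient f a - gradient f c‖ ≤ L * ‖a - c‖)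
    (x y : EuclideanSpace ℝ (Fin d)) :
    f y ≤ f x + ⟪gradient f x, y - x⟫ + L / 2 * ‖y - x‖ ^ 2 := by
  set φ : ℝ → ℝ := fun t =>
    f (x + t • (y - x)) - t * ⟪gradient f x, y - x⟫ - t ^ 2 * (L / 2 * ‖y - x‖ ^ 2)
    with hφdef
  have hcurve : ∀ t : ℝ, HasDerivAt (fun t : ℝ => x + t • (y - x)) (y - x) t := by
    intro t
    simpa using ((hasDerivAt_id t).smul_const (y - x)).const_add x
  have hg : ∀ t : ℝ, HasDerivAt (fun t : ℝ => f (x + t • (y - x)))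
      ⟪gradient f (x + t • (y - x)), y - x⟫ t := by
    intro t
    have h1 := ((hdiff _).hasGradientAt.hasFDerivAt).comp_hasDerivAt t (hcurve t)
    simpa [InnerProductSpace.toDual_apply_apply, Function.comp_def] using h1
  have hφ : ∀ t : ℝ, HasDerivAt φ
      (⟪gradient f (x + t • (y - x)), y - x⟫ - ⟪gradient f x, y - x⟫
        - 2 * t * (L / 2 * ‖y - x‖ ^ 2)) t := by
    intro t
    have h := ((hg t).sub ((hasDerivAt_id t).mul_const ⟪gradient f x, y - x⟫)).sub
      ((hasDerivAt_pow 2 t).mul_const (L / 2 * ‖y - x‖ ^ 2))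
    refine h.congr_deriv ?_
    ring
  have hanti : AntitoneOn φ (Set.Icc (0:ℝ) 1) := by
    apply antitoneOn_of_deriv_nonpos (convex_Icc 0 1)
    · exact fun t _ => (hφ t).continuousAt.continuousWithinAt
    · intro t _
      exact (hφ t).differentiableAt.differentiableWithinAt
    · intro t ht
      rw [interior_Icc] at ht
      rw [(hφ t).deriv]
      have h1 : ⟪gradient f (x + t • (y - x)) - gradient f x, y - x⟫
          ≤ L * t * ‖y - x‖ ^ 2 := by
        calc ⟪gradient f (x + t • (y - x)) - gradient f x, y - x⟫
            ≤ ‖gradient f (x + t • (y - x)) - gradient f x‖ * ‖y - x‖ :=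
              real_inner_le_norm _ _
          _ ≤ (L * ‖(x + t • (y - x)) - x‖) * ‖y - x‖ :=
              mul_le_mul_of_nonneg_right (hlip _ _) (norm_nonneg _)
          _ = L * t * ‖y - x‖ ^ 2 := by
              rw [add_sub_cancel_left, norm_smul, Real.norm_eq_abs,
                abs_of_pos ht.1]
              ring
      rw [inner_sub_left] at h1
      linarith
  have h01 := hanti (Set.left_mem_Icc.2 zero_le_one)
    (Set.right_mem_Icc.2 zero_le_one) zero_le_one
  have hφ0 : φ 0 = f x := by simp [hφdef]
  have hφ1 : φ 1 = f y - ⟪gradient f x, y - x⟫ - L / 2 * ‖y - x‖ ^ 2 := by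
    simp [hφdef]
  rw [hφ0, hφ1] at h01
  linarith

/-- `‖H v‖² ≤ σmax² ‖v‖²` for a symmetric operator with `σmin I ≤ H ≤ σmax I`. -/
lemma spider_op_sq_bound {d : ℕ} (σmin σmax : ℝ) (hσmin : 0 < σmin) (hσ : σmin ≤ σmax)
    (H : EuclideanSpace ℝ (Fin d) →L[ℝ] EuclideanSpace ℝ (Fin d))
    (hsym : ∀ a c : EuclideanSpace ℝ (Fin d), ⟪H a, c⟫ = ⟪a, H c⟫)
    (hlow : ∀ z : EuclideanSpace ℝ (Fin d), σmin * ‖z‖ ^ 2 ≤ ⟪z, H z⟫)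
    (hup : ∀ z : EuclideanSpace ℝ (Fin d), ⟪z, H z⟫ ≤ σmax * ‖z‖ ^ 2)
    (v : EuclideanSpace ℝ (Fin d)) :
    ‖H v‖ ^ 2 ≤ σmax ^ 2 * ‖v‖ ^ 2 := by
  have hσmax : 0 < σmax := lt_of_lt_of_le hσmin hσ
  have hx : ⟪v, H (H v)⟫ = ‖H v‖ ^ 2 := by
    rw [← hsym v (H v), real_inner_self_eq_norm_sq]
  have hx2 : ⟪H v, H v⟫ = ‖H v‖ ^ 2 := real_inner_self_eq_norm_sq _
  have key : (0:ℝ) ≤ ⟪σmax • v - H v, H (σmax • v - H v)⟫ :=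
    le_trans (by positivity) (hlow _)
  have expand : ⟪σmax • v - H v, H (σmax • v - H v)⟫
      = σmax ^ 2 * ⟪v, H v⟫ - 2 * σmax * ‖H v‖ ^ 2 + ⟪H v, H (H v)⟫ := by
    have hm : H (σmax • v - H v) = σmax • H v - H (H v) := by
      rw [map_sub, map_smul]
    rw [hm, inner_sub_left, inner_sub_right, inner_sub_right,
      real_inner_smul_left, real_inner_smul_left,
      real_inner_smul_right, real_inner_smul_right, hx, hx2]
    ring
  have h1 := hup v
  have h2 := hup (H v)
  nlinarith [sq_nonneg ‖H v‖, sq_nonneg ‖v‖, mul_pos hσmax hσmax]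

/-- Lower bound for `⟪g, H v⟫` in terms of `‖v‖²` and `‖g - v‖²`. -/
lemma spider_inner_bound {d : ℕ} (σmin σmax : ℝ) (hσmin : 0 < σmin) (hσ : σmin ≤ σmax)
    (H : EuclideanSpace ℝ (Fin d) →L[ℝ] EuclideanSpace ℝ (Fin d))
    (hsym : ∀ a c : EuclideanSpace ℝ (Fin d), ⟪H a, c⟫ = ⟪a, H c⟫)
    (hlow : ∀ z : EuclideanSpace ℝ (Fin d), σmin * ‖z‖ ^ 2 ≤ ⟪z, H z⟫)
    (hup : ∀ z : EuclideanSpace ℝ (Fin d), ⟪z, H z⟫ ≤ σmax * ‖z‖ ^ 2)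
    (g v : EuclideanSpace ℝ (Fin d)) :
    σmin / 2 * ‖v‖ ^ 2 - σmax / 2 * ‖g - v‖ ^ 2 ≤ ⟪g, H v⟫ := by
  set e := g - v with he
  have hge : g = e + v := by rw [he]; abel
  have hsplit : ⟪g, H v⟫ = ⟪e, H v⟫ + ⟪v, H v⟫ := by
    rw [hge, inner_add_left]
  have hsymev : ⟪v, H e⟫ = ⟪e, H v⟫ := by
    rw [← hsym v e, real_inner_comm]
  have key : (0:ℝ) ≤ ⟪e + v, H (e + v)⟫ := le_trans (by positivity) (hlow _)
  have expand : ⟪e + v, H (e + v)⟫ = ⟪e, H e⟫ + 2 * ⟪e, H v⟫ + ⟪v, H v⟫ := by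
    rw [map_add, inner_add_left, inner_add_right, inner_add_right, hsymev]
    ring
  have h1 := hup e
  have h2 := hlow v
  rw [hsplit]
  nlinarith

/-- Double-sum counting bound for epochs. -/
lemma spider_epoch_sum (a : ℕ → ℝ) (ha : ∀ i, 0 ≤ a i) (K q : ℕ) (hq : 1 ≤ q) :
    ∑ k ∈ Finset.range K, ∑ i ∈ Finset.Ico (q * (k / q)) k, a i
      ≤ (q : ℝ) * ∑ i ∈ Finset.range K, a i := by
  have h1 : ∑ k ∈ Finset.range K, ∑ i ∈ Finset.Ico (q * (k / q)) k, a i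
      = ∑ i ∈ Finset.range K, ∑ k ∈ (Finset.range K).filter
          (fun k => q * (k / q) ≤ i ∧ i < k), a i := by
    apply Finset.sum_comm'
    intro k i
    simp only [Finset.mem_range, Finset.mem_Ico, Finset.mem_filter]
    constructor
    · rintro ⟨hk, h1, h2⟩
      exact ⟨⟨hk, h1, h2⟩, lt_trans h2 hk⟩
    · rintro ⟨⟨hk, h1, h2⟩, _⟩
      exact ⟨hk, h1, h2⟩
  rw [h1, Finset.mul_sum]
  apply Finset.sum_le_sum
  intro i _
  rw [Finset.sum_const, nsmul_eq_mul]
  have hcard : ((Finset.range K).filter (fun k => q * (k / q) ≤ i ∧ i < k)).card ≤ q := by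
    have hsub : (Finset.range K).filter (fun k => q * (k / q) ≤ i ∧ i < k)
        ⊆ Finset.Ico (i + 1) (i + 1 + q) := by
      intro k hk
      simp only [Finset.mem_filter, Finset.mem_range] at hk
      obtain ⟨hkK, ha1, ha2⟩ := hk
      have hd : q * (k / q) + k % q = k := Nat.div_add_mod k q
      have hm : k % q < q := Nat.mod_lt _ (by omega)
      refine Finset.mem_Ico.2 ⟨ha2, ?_⟩
      calc k = q * (k / q) + k % q := hd.symm
        _ ≤ i + k % q := Nat.add_le_add_right ha1 _
        _ < i + q := Nat.add_lt_add_left hm i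
        _ ≤ i + 1 + q := by omega
    calc ((Finset.range K).filter (fun k => q * (k / q) ≤ i ∧ i < k)).card
        ≤ (Finset.Ico (i + 1) (i + 1 + q)).card := Finset.card_le_card hsub
      _ = q := by rw [Nat.card_Ico]; omega
  exact mul_le_mul_of_nonneg_right (by exact_mod_cast hcard) (ha i)

/-- the deterministic core of the SpiderSQN convergence proof.
Combining the per-step descent inequality with the epoch-wise gradient error
bound (with epoch start `k₀ = q⌊k/q⌋`) and telescoping shows
`∑_{k<K} β* ‖v_k‖² ≤ f(x₀) - f*`. -/
theorem spider_sqn_telescoping (d : ℕ) (f : EuclideanSpace ℝ (Fin d) → ℝ)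
    (L fstar : ℝ)
    (hdiff : Differentiable ℝ f)
    (hlip : ∀ a c : EuclideanSpace ℝ (Fin d),
      ‖gradient f a - gradient f c‖ ≤ L * ‖a - c‖)
    (hbdd : ∀ p : EuclideanSpace ℝ (Fin d), fstar ≤ f p)
    (K q b : ℕ) (hq : 1 ≤ q) (hqb : q ≤ b)
    (η σmin σmax : ℝ) (hη : 0 < η) (hσmin : 0 < σmin) (hσ : σmin ≤ σmax)
    (x v : ℕ → EuclideanSpace ℝ (Fin d))
    (H : ℕ → (EuclideanSpace ℝ (Fin d) →L[ℝ] EuclideanSpace ℝ (Fin d)))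
    (hHsym : ∀ k, ∀ a c : EuclideanSpace ℝ (Fin d), ⟪H k a, c⟫ = ⟪a, H k c⟫)
    (hHlow : ∀ k, ∀ z : EuclideanSpace ℝ (Fin d), σmin * ‖z‖ ^ 2 ≤ ⟪z, H k z⟫)
    (hHup : ∀ k, ∀ z : EuclideanSpace ℝ (Fin d), ⟪z, H k z⟫ ≤ σmax * ‖z‖ ^ 2)
    (hstep : ∀ k, x (k + 1) = x k - η • H k (v k))
    (herr : ∀ k, ‖gradient f (x k) - v k‖ ^ 2 ≤
        L ^ 2 * η ^ 2 * σmax ^ 2 / (b : ℝ) *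
          ∑ i ∈ Finset.Ico (q * (k / q)) k, ‖v i‖ ^ 2)
    (βstar : ℝ)
    (hβ : βstar = η * σmin / 2 - L * η ^ 2 * σmax ^ 2 / 2
        - η ^ 3 * σmax ^ 3 * L ^ 2 * (q : ℝ) / (2 * (b : ℝ)))
    (hβpos : 0 < βstar) :
    ∑ k ∈ Finset.range K, βstar * ‖v k‖ ^ 2 ≤ f (x 0) - fstar := by
  rcases subsingleton_or_nontrivial (EuclideanSpace ℝ (Fin d)) with hsub | hnt
  · have hv0 : ∀ k, ‖v k‖ = 0 := fun k => by
      rw [Subsingleton.elim (v k) 0, norm_zero]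
    have : ∑ k ∈ Finset.range K, βstar * ‖v k‖ ^ 2 = 0 := by
      apply Finset.sum_eq_zero
      intro k _
      rw [hv0 k]
      ring
    rw [this]
    linarith [hbdd (x 0)]
  -- nontrivial case: first get 0 ≤ L
  have hL : 0 ≤ L := by
    obtain ⟨a, ha⟩ := exists_ne (0 : EuclideanSpace ℝ (Fin d))
    have h1 := hlip a 0
    have h2 : 0 < ‖a - 0‖ := by
      rw [sub_zero]
      exact norm_pos_iff.2 ha
    nlinarith [norm_nonneg (gradient f a - gradient f 0)]
  have hb : (0:ℝ) < (b : ℝ) := by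
    have : 1 ≤ b := le_trans hq hqb
    exact_mod_cast this
  set α : ℝ := η * σmin / 2 - L * η ^ 2 * σmax ^ 2 / 2 with hα
  set c : ℝ := η * σmax / 2 with hc
  set C : ℝ := L ^ 2 * η ^ 2 * σmax ^ 2 / (b : ℝ) with hCdef
  have hσmax : 0 < σmax := lt_of_lt_of_le hσmin hσ
  have hcpos : 0 ≤ c := by rw [hc]; positivity
  have hCpos : 0 ≤ C := by rw [hCdef]; positivity
  -- per-step descent
  have hstep_ineq : ∀ k, f (x (k + 1)) ≤ f (x k) - α * ‖v k‖ ^ 2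
      + c * ‖gradient f (x k) - v k‖ ^ 2 := by
    intro k
    have hdesc := spider_descent_lemma f L hdiff hlip (x k) (x (k + 1))
    have hdx : x (k + 1) - x k = -(η • H k (v k)) := by
      rw [hstep k]; abel
    rw [hdx] at hdesc
    have hin : ⟪gradient f (x k), -(η • H k (v k))⟫
        = -(η * ⟪gradient f (x k), H k (v k)⟫) := by
      rw [inner_neg_right, real_inner_smul_right]
    have hnrm : ‖-(η • H k (v k))‖ ^ 2 = η ^ 2 * ‖H k (v k)‖ ^ 2 := by
      rw [norm_neg, norm_smul, Real.norm_eq_abs, abs_of_pos hη, mul_pow]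
    rw [hin, hnrm] at hdesc
    have hop := spider_op_sq_bound σmin σmax hσmin hσ (H k) (hHsym k) (hHlow k)
      (hHup k) (v k)
    have hinner := spider_inner_bound σmin σmax hσmin hσ (H k) (hHsym k) (hHlow k)
      (hHup k) (gradient f (x k)) (v k)
    have h3 : L / 2 * (η ^ 2 * ‖H k (v k)‖ ^ 2)
        ≤ L / 2 * (η ^ 2 * (σmax ^ 2 * ‖v k‖ ^ 2)) := by
      apply mul_le_mul_of_nonneg_left _ (by positivity)
      exact mul_le_mul_of_nonneg_left hop (by positivity)
    have h4 : η * (σmin / 2 * ‖v k‖ ^ 2 - σmax / 2 * ‖gradient f (x k) - v k‖ ^ 2)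
        ≤ η * ⟪gradient f (x k), H k (v k)⟫ :=
      mul_le_mul_of_nonneg_left hinner (le_of_lt hη)
    rw [hα, hc]
    nlinarith
  -- telescoping
  have tele : ∀ N : ℕ, ∑ k ∈ Finset.range N,
      (α * ‖v k‖ ^ 2 - c * ‖gradient f (x k) - v k‖ ^ 2) ≤ f (x 0) - f (x N) := by
    intro N
    induction N with
    | zero => simp
    | succ n ih =>
      rw [Finset.sum_range_succ]
      have := hstep_ineq n
      linarith
  have hteleK := tele K
  -- error sum bound
  have herrsum : ∑ k ∈ Finset.range K, ‖gradient f (x k) - v k‖ ^ 2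
      ≤ C * ((q : ℝ) * ∑ k ∈ Finset.range K, ‖v k‖ ^ 2) := by
    calc ∑ k ∈ Finset.range K, ‖gradient f (x k) - v k‖ ^ 2
        ≤ ∑ k ∈ Finset.range K, C * ∑ i ∈ Finset.Ico (q * (k / q)) k, ‖v i‖ ^ 2 :=
          Finset.sum_le_sum (fun k _ => herr k)
      _ = C * ∑ k ∈ Finset.range K, ∑ i ∈ Finset.Ico (q * (k / q)) k, ‖v i‖ ^ 2 := by
          rw [Finset.mul_sum]
      _ ≤ C * ((q : ℝ) * ∑ k ∈ Finset.range K, ‖v k‖ ^ 2) := by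
          apply mul_le_mul_of_nonneg_left _ hCpos
          exact spider_epoch_sum (fun i => ‖v i‖ ^ 2) (fun i => sq_nonneg _) K q hq
  set S : ℝ := ∑ k ∈ Finset.range K, ‖v k‖ ^ 2 with hS
  set E : ℝ := ∑ k ∈ Finset.range K, ‖gradient f (x k) - v k‖ ^ 2 with hE
  have hsplit : ∑ k ∈ Finset.range K,
      (α * ‖v k‖ ^ 2 - c * ‖gradient f (x k) - v k‖ ^ 2) = α * S - c * E := by
    rw [hS, hE, Finset.mul_sum, Finset.mul_sum, ← Finset.sum_sub_distrib]
  rw [hsplit] at hteleK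
  have hgoal : ∑ k ∈ Finset.range K, βstar * ‖v k‖ ^ 2 = βstar * S := by
    rw [hS, Finset.mul_sum]
  rw [hgoal]
  have hβeq : βstar = α - c * C * (q : ℝ) := by
    rw [hβ, hα, hc, hCdef]
    field_simp
  have hcE : c * E ≤ c * C * (q : ℝ) * S := by
    calc c * E ≤ c * (C * ((q : ℝ) * S)) := mul_le_mul_of_nonneg_left herrsum hcpos
      _ = c * C * (q : ℝ) * S := by ring
  have hSnn : 0 ≤ S := Finset.sum_nonneg (fun k _ => sq_nonneg _)
  have hfK := hbdd (x K)
  calc βstar * S = α * S - c * C * (q : ℝ) * S := by rw [hβeq]; ring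
    _ ≤ α * S - c * E := by linarith
    _ ≤ f (x 0) - f (x K) := hteleK
    _ ≤ f (x 0) - fstar := by linarith
end
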